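/- arXiv:1208.3246 — 2 statements merged into one kernel-verified Lean document; each statement's English description precedes it below -/
import Mathlib

section
/- Let 1 ≤ q ≤ 2 ≤ p < ∞ and define r by 1/r = 1/q − 1/p. For every bounded linear operator A : ℓ^p → ℓ^q whose matrix entries a_{j,k} := (A e_k)_j are all nonnegative reals, one has ( ∑_k ( ∑_j a_{j,k}² )^{r/2} )^{1/r} ≤ ‖A‖, i.e. the Hardy–Littlewood column inequality holds with constant M = 1. -/
/-! For finitely supported `x ≥ 0` the entries of `A x` are the nonnegative sums
`∑_k x_k a_{jk}`, so superadditivity of `t ↦ t ^ q` (`q ≥ 1`) gives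
`‖A x‖_q^q ≥ ∑_k x_k^q ‖A e_k‖_q^q`, and `‖A e_k‖_q ≥ ‖A e_k‖_2 =: c_k` because `q ≤ 2`.
Hence the diagonal operator `x ↦ (c_k x_k)_k` maps `ℓ^p → ℓ^q` with norm at most `‖A‖`; testing
it on `x_k = c_k ^ (r / p)`, the equality case of Hölder's inequality, gives `‖c‖_r ≤ ‖A‖`. -/

open scoped ENNReal
open Real

namespace Real

theorem sum_rpow_le_rpow_sum {ι : Type*} {p : ℝ} (hp : 1 ≤ p) {s : Finset ι} {f : ι → ℝ}
    (hf : ∀ i ∈ s, 0 ≤ f i) : ∑ i ∈ s, f i ^ p ≤ (∑ i ∈ s, f i) ^ p := by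
  classical
  induction s using Finset.induction_on with
  | empty => simp [zero_rpow (by linarith : p ≠ 0)]
  | insert i s hi ih =>
    rw [Finset.sum_insert hi, Finset.sum_insert hi]
    have hfs := fun j hj => hf j (Finset.mem_insert_of_mem hj)
    calc f i ^ p + ∑ j ∈ s, f j ^ p ≤ f i ^ p + (∑ j ∈ s, f j) ^ p := by gcongr; exact ih hfs
      _ ≤ (f i + ∑ j ∈ s, f j) ^ p :=
        add_rpow_le_rpow_add (hf i (Finset.mem_insert_self i s)) (Finset.sum_nonneg hfs) hp

theorem tsum_rpow_le_rpow_tsum {ι : Type*} {p : ℝ} (hp : 1 ≤ p) {f : ι → ℝ} (hf : 0 ≤ f)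
    (hsum : Summable f) : ∑' i, f i ^ p ≤ (∑' i, f i) ^ p :=
  tsum_le_of_sum_le (fun i => rpow_nonneg (hf i) p) fun s =>
    (sum_rpow_le_rpow_sum hp fun i _ => hf i).trans <|
      rpow_le_rpow (Finset.sum_nonneg fun i _ => hf i) (hsum.sum_le_tsum s fun i _ => hf i)
        (by linarith)

theorem tsum_rpow_one_div_le_of_exponent_le {ι : Type*} {q s : ℝ} (hq : 0 < q) (hqs : q ≤ s)
    {f : ι → ℝ} (hf : 0 ≤ f) (hsum : Summable fun i => f i ^ q) :
    (∑' i, f i ^ s) ^ (1 / s) ≤ (∑' i, f i ^ q) ^ (1 / q) := by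
  have hs : 0 < s := hq.trans_le hqs
  have hpow : ∀ i, (f i ^ q) ^ (s / q) = f i ^ s := fun i => by
    rw [← rpow_mul (hf i), mul_div_cancel₀ s hq.ne']
  have h := tsum_rpow_le_rpow_tsum ((one_le_div hq).2 hqs) (fun i => rpow_nonneg (hf i) q) hsum
  simp only [hpow] at h
  calc (∑' i, f i ^ s) ^ (1 / s) ≤ ((∑' i, f i ^ q) ^ (s / q)) ^ (1 / s) :=
        rpow_le_rpow (tsum_nonneg fun i => rpow_nonneg (hf i) s) h (by positivity)
    _ = (∑' i, f i ^ q) ^ (1 / q) := by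
      rw [← rpow_mul (tsum_nonneg fun i => rpow_nonneg (hf i) q)]
      field_simp

theorem sum_rpow_mul_column_norm_le_tsum_rpow_sum {ι κ : Type*} {q : ℝ} (hq1 : 1 ≤ q)
    (hq2 : q ≤ 2) {a : κ → ι → ℝ} (ha : ∀ j k, 0 ≤ a j k)
    (hcol : ∀ k, Summable fun j => a j k ^ q) (s : Finset ι) {x : ι → ℝ} (hx : 0 ≤ x)
    (hrow : Summable fun j => (∑ k ∈ s, x k * a j k) ^ q) :
    ∑ k ∈ s, (x k * (∑' j, a j k ^ (2 : ℝ)) ^ (1 / 2 : ℝ)) ^ q ≤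
      ∑' j, (∑ k ∈ s, x k * a j k) ^ q := by
  have hq0 : 0 < q := by linarith
  have hcolNorm_nonneg : ∀ k, 0 ≤ (∑' j, a j k ^ (2 : ℝ)) ^ (1 / 2 : ℝ) := fun k =>
    rpow_nonneg (tsum_nonneg fun j => rpow_nonneg (ha j k) 2) _
  have hcolNorm : ∀ k, ((∑' j, a j k ^ (2 : ℝ)) ^ (1 / 2 : ℝ)) ^ q ≤ ∑' j, a j k ^ q := by
    intro k
    calc ((∑' j, a j k ^ (2 : ℝ)) ^ (1 / 2 : ℝ)) ^ q ≤ ((∑' j, a j k ^ q) ^ (1 / q)) ^ q :=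
          rpow_le_rpow (hcolNorm_nonneg k)
            (tsum_rpow_one_div_le_of_exponent_le hq0 hq2 (ha · k) (hcol k)) hq0.le
      _ = ∑' j, a j k ^ q := by
          rw [← rpow_mul (tsum_nonneg fun j => rpow_nonneg (ha j k) q),
            one_div_mul_cancel hq0.ne', rpow_one]
  have hterm : ∀ k, Summable fun j => (x k * a j k) ^ q := fun k =>
    ((hcol k).mul_left (x k ^ q)).congr fun j => (mul_rpow (hx k) (ha j k)).symm
  calc ∑ k ∈ s, (x k * (∑' j, a j k ^ (2 : ℝ)) ^ (1 / 2 : ℝ)) ^ q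
      = ∑ k ∈ s, x k ^ q * ((∑' j, a j k ^ (2 : ℝ)) ^ (1 / 2 : ℝ)) ^ q :=
        Finset.sum_congr rfl fun k _ => mul_rpow (hx k) (hcolNorm_nonneg k)
    _ ≤ ∑ k ∈ s, x k ^ q * ∑' j, a j k ^ q :=
        Finset.sum_le_sum fun k _ => mul_le_mul_of_nonneg_left (hcolNorm k) (rpow_nonneg (hx k) q)
    _ = ∑' j, ∑ k ∈ s, (x k * a j k) ^ q := by
        rw [Summable.tsum_finsetSum fun k _ => hterm k]
        refine Finset.sum_congr rfl fun k _ => ?_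
        rw [← tsum_mul_left]
        exact tsum_congr fun j => (mul_rpow (hx k) (ha j k)).symm
    _ ≤ ∑' j, (∑ k ∈ s, x k * a j k) ^ q :=
        Summable.tsum_le_tsum
          (fun j => sum_rpow_le_rpow_sum hq1 fun k _ => mul_nonneg (hx k) (ha j k))
          (summable_sum fun k _ => hterm k) hrow

theorem tsum_rpow_one_div_le_of_forall_sum_rpow_le {ι : Type*} {p q r M : ℝ} (hp : 0 < p)
    (hq : 0 < q) (hr : 0 < r) (hpqr : 1 / r = 1 / q - 1 / p) (hM : 0 ≤ M) {c : ι → ℝ}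
    (hc : 0 ≤ c)
    (H : ∀ (s : Finset ι) (x : ι → ℝ), 0 ≤ x →
      (∑ i ∈ s, (x i * c i) ^ q) ^ (1 / q) ≤ M * (∑ i ∈ s, x i ^ p) ^ (1 / p)) :
    (∑' i, c i ^ r) ^ (1 / r) ≤ M := by
  have hsum : ∀ s : Finset ι, ∑ i ∈ s, c i ^ r ≤ M ^ r := by
    intro s
    have hx := H s (fun i => c i ^ (r / p)) fun i => rpow_nonneg (hc i) _
    have hxc : ∀ i, (c i ^ (r / p) * c i) ^ q = c i ^ r := fun i => by
      rw [mul_rpow (rpow_nonneg (hc i) _) (hc i), ← rpow_mul (hc i),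
        ← rpow_add' (hc i) (by positivity)]
      congr 1
      field_simp at hpqr ⊢
      linarith
    have hxp : ∀ i, (c i ^ (r / p)) ^ p = c i ^ r := fun i => by
      rw [← rpow_mul (hc i), div_mul_cancel₀ r hp.ne']
    simp only [hxc, hxp] at hx
    set S := ∑ i ∈ s, c i ^ r
    have hS0 : 0 ≤ S := Finset.sum_nonneg fun i _ => rpow_nonneg (hc i) r
    obtain hS | hS := hS0.eq_or_lt
    · rw [← hS]
      positivity
    have hroot : S ^ (1 / r) ≤ M := by
      rw [hpqr, rpow_sub hS, div_le_iff₀ (by positivity)]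
      exact hx
    calc S = (S ^ (1 / r)) ^ r := by rw [← rpow_mul hS.le, one_div_mul_cancel hr.ne', rpow_one]
      _ ≤ M ^ r := by gcongr
  calc (∑' i, c i ^ r) ^ (1 / r) ≤ (M ^ r) ^ (1 / r) :=
        rpow_le_rpow (tsum_nonneg fun i => rpow_nonneg (hc i) r)
          (tsum_le_of_sum_le (fun i => rpow_nonneg (hc i) r) hsum) (by positivity)
    _ = M := by rw [← rpow_mul hM, mul_one_div_cancel hr.ne', rpow_one]

end Real

section OperatorOnLp

variable {𝕜 ι κ : Type*} [RCLike 𝕜] {P Q : ℝ≥0∞}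

theorem lp.hasSum_rpow_of_apply_eq_ofReal (hQ : 0 < Q.toReal) {f : lp (fun _ : κ => 𝕜) Q}
    {u : κ → ℝ} (hu : 0 ≤ u) (hf : ∀ j, f j = u j) :
    HasSum (fun j => u j ^ Q.toReal) (‖f‖ ^ Q.toReal) := by
  convert lp.hasSum_norm hQ f using 2 with j
  rw [hf j, RCLike.norm_ofReal, abs_of_nonneg (hu j)]

variable [Fact (1 ≤ P)] [Fact (1 ≤ Q)]

theorem lp.norm_sum_single_ofReal [DecidableEq ι] (hP : 0 < P.toReal) (s : Finset ι)
    {x : ι → ℝ} (hx : 0 ≤ x) :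
    ‖∑ i ∈ s, lp.single P i (x i : 𝕜)‖ = (∑ i ∈ s, x i ^ P.toReal) ^ (1 / P.toReal) := by
  have h := lp.norm_sum_single hP (fun i => (x i : 𝕜)) s
  simp only [RCLike.norm_ofReal, abs_of_nonneg (hx _)] at h
  rw [← h, one_div, rpow_rpow_inv (norm_nonneg _) hP.ne']

variable [DecidableEq ι]
  (A : lp (fun _ : ι => 𝕜) P →L[𝕜] lp (fun _ : κ => 𝕜) Q) {a : κ → ι → ℝ}

theorem apply_sum_single_eq_ofReal (hAa : ∀ j k, A (lp.single P k 1) j = a j k)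
    (s : Finset ι) (x : ι → ℝ) (j : κ) :
    A (∑ k ∈ s, lp.single P k (x k : 𝕜)) j = ((∑ k ∈ s, x k * a j k : ℝ) : 𝕜) := by
  have hsingle : ∀ k, (lp.single P k (x k : 𝕜) : lp (fun _ : ι => 𝕜) P) =
      (x k : 𝕜) • lp.single P k 1 := fun k => by
    rw [← lp.single_smul, smul_eq_mul, mul_one]
  simp only [hsingle, map_sum, map_smul, lp.coeFn_sum, Finset.sum_apply, lp.coeFn_smul,
    Pi.smul_apply, hAa, smul_eq_mul]
  norm_cast

theorem sum_rpow_mul_column_norm_le_norm_apply (ha : ∀ j k, 0 ≤ a j k)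
    (hAa : ∀ j k, A (lp.single P k 1) j = a j k) (hQ2 : Q ≤ 2) (s : Finset ι) {x : ι → ℝ}
    (hx : 0 ≤ x) :
    (∑ k ∈ s, (x k * (∑' j, a j k ^ (2 : ℝ)) ^ (1 / 2 : ℝ)) ^ Q.toReal) ^ (1 / Q.toReal) ≤
      ‖A (∑ k ∈ s, lp.single P k (x k : 𝕜))‖ := by
  set q := Q.toReal
  have hq1 : 1 ≤ q := by
    simpa using ENNReal.toReal_mono (hQ2.trans_lt ENNReal.ofNat_lt_top).ne (Fact.out : 1 ≤ Q)
  have hq2 : q ≤ 2 := by simpa using ENNReal.toReal_mono ENNReal.ofNat_ne_top hQ2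
  have hq0 : 0 < q := by linarith
  have hcol : ∀ k, Summable fun j => a j k ^ q := fun k =>
    (lp.hasSum_rpow_of_apply_eq_ofReal hq0 (fun j => ha j k) (hAa · k)).summable
  have hrow : HasSum (fun j => (∑ k ∈ s, x k * a j k) ^ q)
      (‖A (∑ k ∈ s, lp.single P k (x k : 𝕜))‖ ^ q) :=
    lp.hasSum_rpow_of_apply_eq_ofReal hq0
      (fun j => Finset.sum_nonneg fun k _ => mul_nonneg (hx k) (ha j k))
      (apply_sum_single_eq_ofReal A hAa s x)
  calc _ ≤ (‖A (∑ k ∈ s, lp.single P k (x k : 𝕜))‖ ^ q) ^ (1 / q) := by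
        refine rpow_le_rpow (Finset.sum_nonneg fun k _ => ?_) ?_ (by positivity)
        · exact rpow_nonneg (mul_nonneg (hx k)
            (rpow_nonneg (tsum_nonneg fun j => rpow_nonneg (ha j k) 2) _)) q
        · rw [← hrow.tsum_eq]
          exact Real.sum_rpow_mul_column_norm_le_tsum_rpow_sum hq1 hq2 ha hcol s hx hrow.summable
    _ = _ := by rw [← rpow_mul (norm_nonneg _), mul_one_div_cancel hq0.ne', rpow_one]

end OperatorOnLp

theorem hardy_littlewood_column_positive_general (p q r : ℝ) (hq2 : q ≤ 2)
    [Fact (1 ≤ ENNReal.ofReal p)] [Fact (1 ≤ ENNReal.ofReal q)]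
    (hr : 0 < r) (hrdef : 1 / r = 1 / q - 1 / p)
    (A : lp (fun _ : ℕ => ℂ) (ENNReal.ofReal p) →L[ℂ] lp (fun _ : ℕ => ℂ) (ENNReal.ofReal q))
    (a : ℕ → ℕ → ℝ) (ha : ∀ j k, 0 ≤ a j k)
    (hAa : ∀ j k : ℕ, A (lp.single (ENNReal.ofReal p) k 1) j = (a j k : ℂ)) :
    (∑' k : ℕ, (∑' j : ℕ, a j k ^ (2 : ℝ)) ^ (r / 2)) ^ (1 / r) ≤ ‖A‖ := by
  have hp : 1 ≤ p := ENNReal.one_le_ofReal.1 Fact.out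
  have hq : 1 ≤ q := ENNReal.one_le_ofReal.1 Fact.out
  have hP : (ENNReal.ofReal p).toReal = p := ENNReal.toReal_ofReal (by linarith)
  have hQ : (ENNReal.ofReal q).toReal = q := ENNReal.toReal_ofReal (by linarith)
  have hQ2 : ENNReal.ofReal q ≤ 2 := by simpa using ENNReal.ofReal_le_ofReal hq2
  have hcolumn : ∀ k, (∑' j, a j k ^ (2 : ℝ)) ^ (r / 2) =
      ((∑' j, a j k ^ (2 : ℝ)) ^ (1 / 2 : ℝ)) ^ r := fun k => by
    rw [← rpow_mul (tsum_nonneg fun j => rpow_nonneg (ha j k) 2), one_div_mul_eq_div]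
  simp only [hcolumn]
  refine tsum_rpow_one_div_le_of_forall_sum_rpow_le (by linarith) (by linarith) hr hrdef
    (norm_nonneg A) (fun k => rpow_nonneg (tsum_nonneg fun j => rpow_nonneg (ha j k) 2) _)
    fun s x hx => ?_
  have hcolumns := sum_rpow_mul_column_norm_le_norm_apply A ha hAa hQ2 s hx
  rw [hQ] at hcolumns
  have hnorm : ‖∑ k ∈ s, lp.single (ENNReal.ofReal p) k (x k : ℂ)‖ =
      (∑ k ∈ s, x k ^ p) ^ (1 / p) := by
    have h := lp.norm_sum_single_ofReal (𝕜 := ℂ) (P := ENNReal.ofReal p) (by linarith) s hx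
    rw [hP] at h
    exact h
  calc _ ≤ _ := hcolumns
    _ ≤ ‖A‖ * ‖∑ k ∈ s, lp.single (ENNReal.ofReal p) k (x k : ℂ)‖ := A.le_opNorm _
    _ = _ := by rw [hnorm]

/-- **Hardy–Littlewood column inequality for positive operators, with constant 1.**
For `1 ≤ q ≤ 2 ≤ p < ∞` and `1/r = 1/q - 1/p`, every bounded operator `A : ℓ^p → ℓ^q`
whose matrix entries `(A e_k) j = a j k` are nonnegative reals satisfies
`(∑_k (∑_j (a j k)²)^(r/2))^(1/r) ≤ ‖A‖`. -/
theorem hardy_littlewood_column_positive (p q r : ℝ) (hq1 : 1 ≤ q) (hq2 : q ≤ 2) (hp2 : 2 ≤ p)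
    [Fact (1 ≤ ENNReal.ofReal p)] [Fact (1 ≤ ENNReal.ofReal q)]
    (hr : 0 < r) (hrdef : 1 / r = 1 / q - 1 / p)
    (A : lp (fun _ : ℕ => ℂ) (ENNReal.ofReal p) →L[ℂ] lp (fun _ : ℕ => ℂ) (ENNReal.ofReal q))
    (a : ℕ → ℕ → ℝ) (ha : ∀ j k, 0 ≤ a j k)
    (hAa : ∀ j k : ℕ, A (lp.single (ENNReal.ofReal p) k 1) j = (a j k : ℂ)) :
    (∑' k : ℕ, (∑' j : ℕ, a j k ^ (2 : ℝ)) ^ (r / 2)) ^ (1 / r) ≤ ‖A‖ :=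
  hardy_littlewood_column_positive_general p q r hq2 hr hrdef A a ha hAa
end

section
/- Let 2 ≤ p < ∞, let r > 0, let d = (d_j) be a nonnegative sequence in ℓ^r, and let B : ℓ^p → ℓ^p be a bounded linear operator with nonnegative matrix entries b_{j,k} := (B e_k)_j. Set a_{j,k} := d_j · b_{j,k}. Then ( ∑_j ( ∑_k a_{j,k}² )^{r/2} )^{1/r} ≤ ‖d‖_r · ‖B‖, where ‖B‖ is the operator norm of B on ℓ^p. -/
/-!
Each row of `B` has `ℓ²` norm at most `‖B‖`: testing `B` on the conjugated row `x` of row `j`,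
truncated to a finite set, gives `(B x) j = ‖x‖₂²`, while `‖x‖_p ≤ ‖x‖₂` because `p ≥ 2`; hence
`‖x‖₂² ≤ ‖B‖ ‖x‖₂`. So the `ℓ²` norm of row `j` of `a` is at most `d j * ‖B‖`, and taking the
`ℓ^r` norm over `j` gives the bound.
-/

open Finset ENNReal

theorem Real.sum_rpow_le_rpow_sum_s9 {ι : Type*} (s : Finset ι) {f : ι → ℝ} (hf : ∀ i ∈ s, 0 ≤ f i)
    {q : ℝ} (hq : 1 ≤ q) : ∑ i ∈ s, f i ^ q ≤ (∑ i ∈ s, f i) ^ q := by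
  have hq' : 1 + (q - 1) ≠ 0 := by linarith
  have hsum : 0 ≤ ∑ i ∈ s, f i := sum_nonneg hf
  calc ∑ i ∈ s, f i ^ q = ∑ i ∈ s, f i * f i ^ (q - 1) := by
        refine sum_congr rfl fun i hi => ?_
        rw [← Real.rpow_one_add' (hf i hi) hq', add_sub_cancel]
    _ ≤ ∑ i ∈ s, f i * (∑ j ∈ s, f j) ^ (q - 1) :=
        sum_le_sum fun i hi => mul_le_mul_of_nonneg_left
          (Real.rpow_le_rpow (hf i hi) (single_le_sum hf hi) (by linarith)) (hf i hi)
    _ = (∑ i ∈ s, f i) ^ q := by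
        rw [← sum_mul, ← Real.rpow_one_add' hsum hq']
        ring_nf

theorem lp.norm_sum_single_le_sqrt {α : Type*} [DecidableEq α] {E : α → Type*}
    [∀ i, NormedAddCommGroup (E i)] {p : ℝ} (hp : 2 ≤ p) [Fact (1 ≤ ENNReal.ofReal p)]
    (f : ∀ i, E i) (s : Finset α) :
    ‖∑ i ∈ s, lp.single (ENNReal.ofReal p) i (f i)‖ ≤ √(∑ i ∈ s, ‖f i‖ ^ 2) := by
  have hp0 : 0 < p := by linarith
  have hpow := lp.norm_sum_single (p := ENNReal.ofReal p) (by rwa [toReal_ofReal hp0.le]) f s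
  rw [toReal_ofReal hp0.le] at hpow
  refine (Real.rpow_le_rpow_iff (norm_nonneg _) (Real.sqrt_nonneg _) hp0).1 ?_
  rw [hpow, Real.sqrt_eq_rpow, ← Real.rpow_mul (sum_nonneg fun i _ => by positivity)]
  calc ∑ i ∈ s, ‖f i‖ ^ p = ∑ i ∈ s, (‖f i‖ ^ 2) ^ (p / 2) := by
        refine sum_congr rfl fun i _ => ?_
        rw [← Real.rpow_natCast, ← Real.rpow_mul (norm_nonneg _)]
        congr 1
        ring
    _ ≤ (∑ i ∈ s, ‖f i‖ ^ 2) ^ (p / 2) :=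
        Real.sum_rpow_le_rpow_sum_s9 s (fun i _ => by positivity) (by linarith)
    _ = (∑ i ∈ s, ‖f i‖ ^ 2) ^ (1 / 2 * p) := by ring_nf

section RowBound

variable {𝕜 α : Type*} [RCLike 𝕜] [DecidableEq α] {p : ℝ} [Fact (1 ≤ ENNReal.ofReal p)]

theorem sum_norm_sq_apply_single_le (hp : 2 ≤ p)
    (B : lp (fun _ : α => 𝕜) (ENNReal.ofReal p) →L[𝕜] lp (fun _ : α => 𝕜) (ENNReal.ofReal p))
    (j : α) (s : Finset α) :
    ∑ k ∈ s, ‖B (lp.single (ENNReal.ofReal p) k 1) j‖ ^ 2 ≤ ‖B‖ ^ 2 := by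
  set c : α → 𝕜 := fun k => B (lp.single (ENNReal.ofReal p) k 1) j
  set S := ∑ k ∈ s, ‖c k‖ ^ 2
  set x := ∑ k ∈ s, lp.single (ENNReal.ofReal p) k (starRingEnd 𝕜 (c k))
  have hx : ‖x‖ ≤ √S := by
    simpa only [RCLike.norm_conj] using
      lp.norm_sum_single_le_sqrt hp (fun k => starRingEnd 𝕜 (c k)) s
  have hBx : B x j = (S : 𝕜) := by
    have hsingle : ∀ k, lp.single (ENNReal.ofReal p) k (starRingEnd 𝕜 (c k))
        = starRingEnd 𝕜 (c k) • lp.single (E := fun _ : α => 𝕜) (ENNReal.ofReal p) k 1 := by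
      intro k
      rw [← lp.single_smul, smul_eq_mul, mul_one]
    simp only [x, hsingle, map_sum, map_smul, lp.coeFn_sum, lp.coeFn_smul, Finset.sum_apply,
      Pi.smul_apply, smul_eq_mul, S]
    push_cast
    exact sum_congr rfl fun k _ => RCLike.conj_mul (c k)
  have hS : S ≤ ‖B‖ * √S :=
    calc S = ‖B x j‖ := by rw [hBx, RCLike.norm_ofReal, abs_of_nonneg (by positivity)]
      _ ≤ ‖B x‖ := lp.norm_apply_le_norm (by rw [Ne, ofReal_eq_zero, not_le]; linarith) _ j
      _ ≤ ‖B‖ * ‖x‖ := B.le_opNorm x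
      _ ≤ ‖B‖ * √S := by gcongr
  have hsq : √S ^ 2 = S := Real.sq_sqrt (by positivity)
  nlinarith [sq_nonneg (‖B‖ - √S), norm_nonneg B, Real.sqrt_nonneg S]

theorem tsum_norm_sq_apply_single_le (hp : 2 ≤ p)
    (B : lp (fun _ : α => 𝕜) (ENNReal.ofReal p) →L[𝕜] lp (fun _ : α => 𝕜) (ENNReal.ofReal p))
    (j : α) :
    ∑' k, ‖B (lp.single (ENNReal.ofReal p) k 1) j‖ ^ 2 ≤ ‖B‖ ^ 2 :=
  Real.tsum_le_of_sum_le (fun _ => by positivity) (sum_norm_sq_apply_single_le hp B j)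

end RowBound

theorem rpow_tsum_rpow_le_mul_of_le_mul {ι : Type*} {v d : ι → ℝ} {M r : ℝ} (hr : 0 < r)
    (hv : ∀ j, 0 ≤ v j) (hd0 : ∀ j, 0 ≤ d j) (hd : Summable fun j => d j ^ r) (hM : 0 ≤ M)
    (hvd : ∀ j, v j ≤ d j * M) :
    (∑' j, v j ^ r) ^ (1 / r) ≤ (∑' j, d j ^ r) ^ (1 / r) * M := by
  have hterm : ∀ j, v j ^ r ≤ d j ^ r * M ^ r := fun j => by
    rw [← Real.mul_rpow (hd0 j) hM]
    exact Real.rpow_le_rpow (hv j) (hvd j) hr.le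
  have hsum : ∑' j, v j ^ r ≤ (∑' j, d j ^ r) * M ^ r := by
    rw [← tsum_mul_right]
    have hmaj : Summable fun j => d j ^ r * M ^ r := hd.mul_right _
    exact Summable.tsum_le_tsum hterm
      (hmaj.of_nonneg_of_le (fun j => Real.rpow_nonneg (hv j) r) hterm) hmaj
  calc (∑' j, v j ^ r) ^ (1 / r) ≤ ((∑' j, d j ^ r) * M ^ r) ^ (1 / r) := by
        gcongr
        exact tsum_nonneg fun j => Real.rpow_nonneg (hv j) r
    _ = (∑' j, d j ^ r) ^ (1 / r) * M := by
        rw [Real.mul_rpow (tsum_nonneg fun j => Real.rpow_nonneg (hd0 j) r) (by positivity),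
          ← Real.rpow_mul hM, mul_one_div_cancel hr.ne', Real.rpow_one]

theorem row_estimate_diag_factor_general (p r : ℝ) (hp2 : 2 ≤ p)
    [Fact (1 ≤ ENNReal.ofReal p)] (hr : 0 < r)
    (d : ℕ → ℝ) (hd0 : ∀ j, 0 ≤ d j) (hd : Memℓp d (ENNReal.ofReal r))
    (B : lp (fun _ : ℕ => ℂ) (ENNReal.ofReal p) →L[ℂ] lp (fun _ : ℕ => ℂ) (ENNReal.ofReal p))
    (b : ℕ → ℕ → ℝ)
    (hBb : ∀ j k : ℕ, B (lp.single (ENNReal.ofReal p) k 1) j = (b j k : ℂ)) :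
    (∑' j : ℕ, (∑' k : ℕ, (d j * b j k) ^ (2 : ℝ)) ^ (r / 2)) ^ (1 / r)
      ≤ (∑' j : ℕ, d j ^ r) ^ (1 / r) * ‖B‖ := by
  have hdr : Summable fun j => d j ^ r := by
    simpa [toReal_ofReal hr.le, Real.norm_of_nonneg (hd0 _)] using
      hd.summable (by rwa [toReal_ofReal hr.le])
  have hrow : ∀ j, ∑' k, b j k ^ 2 ≤ ‖B‖ ^ 2 := fun j => by
    simpa [hBb, Complex.norm_real, sq_abs] using tsum_norm_sq_apply_single_le hp2 B j
  simp only [Real.rpow_two]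
  have hrowd : ∀ j, ∑' k, (d j * b j k) ^ 2 ≤ (d j * ‖B‖) ^ 2 := fun j => by
    simp only [mul_pow, tsum_mul_left]
    exact mul_le_mul_of_nonneg_left (hrow j) (sq_nonneg _)
  have hpow : ∀ j, (∑' k, (d j * b j k) ^ 2) ^ (r / 2) = √(∑' k, (d j * b j k) ^ 2) ^ r :=
    fun j => by
      rw [Real.sqrt_eq_rpow, ← Real.rpow_mul (tsum_nonneg fun k => by positivity)]
      ring_nf
  simp only [hpow]
  refine rpow_tsum_rpow_le_mul_of_le_mul hr (fun j => Real.sqrt_nonneg _) hd0 hdr (norm_nonneg B)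
    fun j => ?_
  exact Real.sqrt_le_iff.2 ⟨mul_nonneg (hd0 j) (norm_nonneg B), hrowd j⟩

/-- **Key estimate for the row inequality.** Let `2 ≤ p < ∞`, `r > 0`, let `d ∈ ℓ^r` be a
nonnegative sequence and let `B : ℓ^p → ℓ^p` be a bounded operator with nonnegative matrix
entries `b j k = (B e_k) j`. With `a j k := d j * b j k`, one has
`(∑_j (∑_k (a j k)²)^(r/2))^(1/r) ≤ ‖d‖_r * ‖B‖`. -/
theorem row_estimate_diag_factor (p r : ℝ) (hp2 : 2 ≤ p)
    [Fact (1 ≤ ENNReal.ofReal p)] (hr : 0 < r)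
    (d : ℕ → ℝ) (hd0 : ∀ j, 0 ≤ d j) (hd : Memℓp d (ENNReal.ofReal r))
    (B : lp (fun _ : ℕ => ℂ) (ENNReal.ofReal p) →L[ℂ] lp (fun _ : ℕ => ℂ) (ENNReal.ofReal p))
    (b : ℕ → ℕ → ℝ) (hb0 : ∀ j k, 0 ≤ b j k)
    (hBb : ∀ j k : ℕ, B (lp.single (ENNReal.ofReal p) k 1) j = (b j k : ℂ)) :
    (∑' j : ℕ, (∑' k : ℕ, (d j * b j k) ^ (2 : ℝ)) ^ (r / 2)) ^ (1 / r)
      ≤ (∑' j : ℕ, d j ^ r) ^ (1 / r) * ‖B‖ :=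
  row_estimate_diag_factor_general p r hp2 hr d hd0 hd B b hBb
end
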